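/- Let Ω be the open unit disk in ℝ² ≅ ℂ. For every γ ∈ L²(Ω) and all integers i, j ≥ 1: ∫_Ω γ(z) ⟨∇Re(z^i), ∇Im(z^j)⟩ dz = −∫_Ω γ(z) ⟨∇Re(z^j), ∇Im(z^i)⟩ dz; that is, the matrix K^{cs} with entries K^{cs}_{i,j} = ∫_Ω γ ⟨∇Re(z^i), ∇Im(z^j)⟩ dz is antisymmetric. -/

import Mathlib

/-!
For holomorphic `f`, the Cauchy–Riemann equations give `∇ Re f = conj f'` and
`∇ Im f = I * conj f'`, so `⟪∇ Re f, ∇ Im g⟫ = -Im (f' * conj g')` pointwise. This is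
antisymmetric in `f, g`, so the two integrands are negatives of each other at every point.
-/

open MeasureTheory
open scoped RealInnerProductSpace ComplexConjugate

theorem HasDerivAt.hasGradientAt_re {f : ℂ → ℂ} {f' z : ℂ} (hf : HasDerivAt f f' z) :
    HasGradientAt (fun w => (f w).re) (conj f') z := by
  rw [hasGradientAt_iff_hasFDerivAt]
  refine (Complex.reCLM.hasFDerivAt.comp z (hf.hasFDerivAt.restrictScalars ℝ)).congr_fderiv ?_
  ext v
  simp

theorem HasDerivAt.hasGradientAt_im {f : ℂ → ℂ} {f' z : ℂ} (hf : HasDerivAt f f' z) :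
    HasGradientAt (fun w => (f w).im) (Complex.I * conj f') z := by
  rw [hasGradientAt_iff_hasFDerivAt]
  refine (Complex.imCLM.hasFDerivAt.comp z (hf.hasFDerivAt.restrictScalars ℝ)).congr_fderiv ?_
  ext v
  simp only [ContinuousLinearMap.comp_apply, ContinuousLinearMap.coe_restrictScalars',
    ContinuousLinearMap.toSpanSingleton_apply, smul_eq_mul, Complex.imCLM_apply,
    InnerProductSpace.toDual_apply_apply, Complex.inner, Complex.mul_re, Complex.mul_im,
    Complex.conj_re, Complex.conj_im, Complex.I_re, Complex.I_im]
  ring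

theorem Complex.inner_conj_I_mul_conj_antisymm (a b : ℂ) :
    ⟪conj a, I * conj b⟫ = -⟪conj b, I * conj a⟫ := by
  simp only [Complex.inner, conj_conj, mul_re, mul_im, conj_re, conj_im, I_re, I_im]
  ring

theorem inner_gradient_re_gradient_im_antisymm {f g : ℂ → ℂ} {z : ℂ}
    (hf : DifferentiableAt ℂ f z) (hg : DifferentiableAt ℂ g z) :
    ⟪gradient (fun w => (f w).re) z, gradient (fun w => (g w).im) z⟫
      = -⟪gradient (fun w => (g w).re) z, gradient (fun w => (f w).im) z⟫ := by
  rw [hf.hasDerivAt.hasGradientAt_re.gradient, hg.hasDerivAt.hasGradientAt_im.gradient,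
    hg.hasDerivAt.hasGradientAt_re.gradient, hf.hasDerivAt.hasGradientAt_im.gradient]
  exact Complex.inner_conj_I_mul_conj_antisymm _ _

theorem linearized_DtN_cos_sin_antisymmetric_general (γ : ℂ → ℝ) (i j : ℕ) :
    (∫ z in Metric.ball (0:ℂ) 1,
        γ z * ⟪gradient (fun w : ℂ => (w ^ i).re) z,
               gradient (fun w : ℂ => (w ^ j).im) z⟫)
      = -∫ z in Metric.ball (0:ℂ) 1,
          γ z * ⟪gradient (fun w : ℂ => (w ^ j).re) z,
                 gradient (fun w : ℂ => (w ^ i).im) z⟫ := by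
  rw [← integral_neg]
  congr 1
  funext z
  rw [inner_gradient_re_gradient_im_antisymm (differentiableAt_pow i) (differentiableAt_pow j),
    mul_neg]

/-- for every `γ ∈ L²` of the unit disk and all `i, j ≥ 1`, the matrix
`K^{cs}_{i,j} = ∫_Ω γ ⟨∇Re(z^i), ∇Im(z^j)⟩` is antisymmetric. -/
theorem linearized_DtN_cos_sin_antisymmetric (γ : ℂ → ℝ)
    (hγ : MemLp γ 2 (volume.restrict (Metric.ball (0:ℂ) 1)))
    (i j : ℕ) (hi : 1 ≤ i) (hj : 1 ≤ j) :
    (∫ z in Metric.ball (0:ℂ) 1,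
        γ z * ⟪gradient (fun w : ℂ => (w ^ i).re) z,
               gradient (fun w : ℂ => (w ^ j).im) z⟫)
      = -∫ z in Metric.ball (0:ℂ) 1,
          γ z * ⟪gradient (fun w : ℂ => (w ^ j).re) z,
                 gradient (fun w : ℂ => (w ^ i).im) z⟫ :=
  linearized_DtN_cos_sin_antisymmetric_general γ i j
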